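/- Let c > 0 and N ≥ c² be real numbers. Then for all real x, y₁, y₂ satisfying c√N ≤ y₁ ≤ N, −N ≤ y₂ ≤ −c√N, and x ≥ c√N + √(−y₁·y₂), one has TP₁(x, y₁, y₂) ≥ c²N / (2(c√N + N)). -/
import Mathlib


/-- `TP₁(x, y₁, y₂) = √((x² + y₁²)(x² + y₂²)) / (2x) − (y₁ − y₂)/2`. -/
noncomputable def TP1 (x y₁ y₂ : ℝ) : ℝ :=
  Real.sqrt ((x ^ 2 + y₁ ^ 2) * (x ^ 2 + y₂ ^ 2)) / (2 * x) - (y₁ - y₂) / 2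

set_option maxHeartbeats 2000000 in
/-- For `c > 0`, `N ≥ c²`, and all `x, y₁, y₂` with `c√N ≤ y₁ ≤ N`,
`−N ≤ y₂ ≤ −c√N`, and `x ≥ c√N + √(−y₁·y₂)`, one has
`TP₁(x, y₁, y₂) ≥ c²N / (2(c√N + N))`. -/
theorem stmt7 (c N : ℝ) (hc : 0 < c) (hN : c ^ 2 ≤ N) (x y₁ y₂ : ℝ)
    (hy₁l : c * Real.sqrt N ≤ y₁) (hy₁u : y₁ ≤ N)
    (hy₂l : -N ≤ y₂) (hy₂u : y₂ ≤ -(c * Real.sqrt N))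
    (hx : c * Real.sqrt N + Real.sqrt (-(y₁ * y₂)) ≤ x) :
    c ^ 2 * N / (2 * (c * Real.sqrt N + N)) ≤ TP1 x y₁ y₂ := by
  have hN0 : 0 < N := lt_of_lt_of_le (pow_pos hc 2) hN
  set s : ℝ := c * Real.sqrt N with hs_def
  have hsqN : 0 < Real.sqrt N := Real.sqrt_pos.2 hN0
  have hs : 0 < s := mul_pos hc hsqN
  have hNsq : Real.sqrt N ^ 2 = N := Real.sq_sqrt hN0.le
  have hcs : c ≤ Real.sqrt N := by nlinarith [hsqN, hNsq]
  have hsN : s ≤ N := by nlinarith [hsqN, hNsq, hcs]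
  have hs2 : s ^ 2 = c ^ 2 * N := by rw [hs_def, mul_pow, hNsq]
  have hb1 : s ≤ -y₂ := by linarith
  have hb2 : -y₂ ≤ N := by linarith
  have hy₁0 : 0 < y₁ := lt_of_lt_of_le hs hy₁l
  have hab : 0 ≤ -(y₁ * y₂) := by nlinarith
  set t : ℝ := Real.sqrt (-(y₁ * y₂)) with ht_def
  have ht0 : 0 ≤ t := Real.sqrt_nonneg _
  have ht2 : t ^ 2 = y₁ * (-y₂) := by rw [ht_def, Real.sq_sqrt hab]; ring
  have hts : s ≤ t := by nlinarith [mul_le_mul hy₁l hb1 hs.le hy₁0.le]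
  have htN : t ≤ N := by nlinarith [mul_le_mul hy₁u hb2 (le_trans hs.le hb1) hN0.le]
  have hx' : s + t ≤ x := hx
  have hx0 : 0 < x := lt_of_lt_of_le (by linarith) hx'
  have hσ : N * (y₁ + -y₂) ≤ N ^ 2 + t ^ 2 := by
    nlinarith [mul_nonneg (sub_nonneg.2 hy₁u) (sub_nonneg.2 hb2)]
  have hxm : (s+t)^2 ≤ x^2 := by nlinarith
  -- the quartic-in-t factor
  have hq : 0 ≤ -s^2*N^2 + (3*s^2*N+2*s^3)*t + (4*s^2+6*s*N+2*N^2)*t^2 + (2*s+2*N)*t^3 := by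
    have e1 : 0 ≤ N^2*(t^2-s^2) := mul_nonneg (by positivity) (by nlinarith [hts, hs.le, ht0])
    have e2 : 0 ≤ N^2*t^2 := by positivity
    have e3 : 0 ≤ s^2*N*t := by positivity
    have e4 : 0 ≤ s^3*t := by positivity
    have e5 : 0 ≤ s^2*t^2 := by positivity
    have e6 : 0 ≤ s*N*t^2 := by positivity
    have e7 : 0 ≤ s*t^3 := by positivity
    have e8 : 0 ≤ N*t^3 := by positivity
    linarith
  have hGm : (s+t)^2 * (2*s^2*(N^2+t^2)*(s+N)+N*s^4) ≤ N*(s+N)^2*(s*(s+2*t))^2 := by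
    have e0 : 0 ≤ s^2*((N-t)*(-s^2*N^2 + (3*s^2*N+2*s^3)*t + (4*s^2+6*s*N+2*N^2)*t^2 + (2*s+2*N)*t^3)) :=
      mul_nonneg (sq_nonneg s) (mul_nonneg (sub_nonneg.2 htN) hq)
    linarith
  have hbr : 2*s^2*(N^2+t^2)*(s+N) + N*s^4 ≤ N*(s+N)^2*(x^2+(s+t)^2-2*t^2) := by
    have sN : (0:ℝ) ≤ s+N := by positivity
    have e1 : 0 ≤ N*(s+N)^2*(x^2-(s+t)^2) := mul_nonneg (by positivity) (sub_nonneg.2 hxm)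
    have e2 : 0 ≤ s*(s+N)*(N^2*(t-s)) :=
      mul_nonneg (mul_nonneg hs.le sN) (mul_nonneg (by positivity) (sub_nonneg.2 hts))
    have e3 : 0 ≤ s*(s+N)*(t*(N*(N-t))) :=
      mul_nonneg (mul_nonneg hs.le sN) (mul_nonneg ht0 (mul_nonneg hN0.le (sub_nonneg.2 htN)))
    have e4 : 0 ≤ s*(s+N)*(t*(t*(N-s))) :=
      mul_nonneg (mul_nonneg hs.le sN) (mul_nonneg ht0 (mul_nonneg ht0 (by linarith : (0:ℝ) ≤ N-s)))
    have e5 : 0 ≤ s*(s+N)*(N*(s*t)) := by positivity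
    have e6 : (0:ℝ) ≤ N*s^4 := by positivity
    have e7 : (0:ℝ) ≤ s^3*N^2 := by positivity
    have e8 : (0:ℝ) ≤ s^2*N^3 := by positivity
    linarith
  have hG : x^2*(2*s^2*(N^2+t^2)*(s+N)+N*s^4) ≤ N*(s+N)^2*(x^2-t^2)^2 := by
    have e1 : 0 ≤ (x^2-(s+t)^2) * (N*(s+N)^2*(x^2+(s+t)^2-2*t^2) - (2*s^2*(N^2+t^2)*(s+N)+N*s^4)) :=
      mul_nonneg (sub_nonneg.2 hxm) (sub_nonneg.2 hbr)
    nlinarith [hGm, e1]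
  have hkey2 : x^2*(2*s^2*(y₁ + -y₂)*(s+N)+s^4) ≤ (x^2-t^2)^2*(s+N)^2 := by
    have h7 : 0 ≤ 2*s^2*(s+N)*x^2 * (N^2 + t^2 - N*(y₁ + -y₂)) :=
      mul_nonneg (by positivity) (by linarith)
    nlinarith [hG, hN0]
  -- introduce u = s^2/(2(s+N))
  have hd : (0:ℝ) < 2*(s+N) := by positivity
  set u : ℝ := s^2/(2*(s+N)) with hu_def
  have hu : u * (2*(s+N)) = s^2 := div_mul_cancel₀ _ (ne_of_gt hd)
  have hu0 : 0 ≤ u := by positivity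
  have hsq2 : 0 < (s+N)^2 := by positivity
  have hc2 : x^2*(4*u*(y₁ + -y₂) + 4*u^2) ≤ (x^2-t^2)^2 := by
    have h8 : x^2*(4*u*(y₁ + -y₂) + 4*u^2) * (s+N)^2 ≤ (x^2-t^2)^2 * (s+N)^2 := by
      have e1 : x^2*(4*u*(y₁ + -y₂) + 4*u^2) * (s+N)^2
          = x^2*(2*(u*(2*(s+N)))*(y₁ + -y₂)*(s+N) + (u*(2*(s+N)))^2) := by ring
      rw [e1, hu]
      calc x^2*(2*s^2*(y₁ + -y₂)*(s+N) + (s^2)^2)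
          = x^2*(2*s^2*(y₁ + -y₂)*(s+N)+s^4) := by ring
        _ ≤ (x^2-t^2)^2*(s+N)^2 := hkey2
    exact le_of_mul_le_mul_right h8 hsq2
  have hyy : y₁*y₂ = -t^2 := by linarith [ht2]
  have hstep : x*(y₁-y₂) + 2*x*u ≤ Real.sqrt ((x^2+y₁^2)*(x^2+y₂^2)) := by
    rw [Real.le_sqrt (by nlinarith) (by positivity)]
    have h6 : x^2*(y₁*y₂) = -(x^2*t^2) := by rw [hyy]; ring
    have hyy4 : (y₁*y₂)^2 = t^4 := by rw [hyy]; ring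
    linarith [hc2, h6, hyy4]
  have hfin : (y₁-y₂)/2 + u ≤ Real.sqrt ((x^2+y₁^2)*(x^2+y₂^2)) / (2*x) := by
    rw [le_div_iff₀ (by positivity : (0:ℝ) < 2*x)]
    calc ((y₁-y₂)/2 + u) * (2*x) = x*(y₁-y₂) + 2*x*u := by ring
      _ ≤ _ := hstep
  have hgoal : c^2*N/(2*(s+N)) = u := by rw [hu_def, hs2]
  rw [hgoal]
  unfold TP1
  linarith [hfin]
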